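/- Let λ, μ, γ be real numbers with λ + μ + γ ≠ 0, and let M(λ,μ,γ) be the 3×3 real matrix whose rows are (λ,λ,λ), (μ,μ,μ), (γ,γ,γ). If one of the following holds: (1) λ = 0 and μγ > 0; (2) μ = 0 and λγ > 0; (3) γ = 0 and λμ > 0; then the evolution algebra E_{M(λ,μ,γ)} is isomorphic to the evolution algebra E₅ whose structure matrix has rows (1,0,0), (0,0,0), (1,0,0). -/
import Mathlib


/-- Evolution algebra multiplication on ℝ³ determined by a structure matrix `A`:
`(x ∗_A y) j = ∑ i, x i * y i * A i j`. -/
def evolMul (A : Matrix (Fin 3) (Fin 3) ℝ) (x y : Fin 3 → ℝ) : Fin 3 → ℝ :=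
  fun j => ∑ i, x i * y i * A i j

/-- The evolution algebras with structure matrices `A` and `B` are isomorphic:
there is an ℝ-linear equivalence of ℝ³ intertwining the two multiplications. -/
def EvolIso (A B : Matrix (Fin 3) (Fin 3) ℝ) : Prop :=
  ∃ f : (Fin 3 → ℝ) ≃ₗ[ℝ] (Fin 3 → ℝ),
    ∀ x y, f (evolMul A x y) = evolMul B (f x) (f y)

/-- If an invertible matrix `M` intertwines the two evolution multiplications (as `mulVec`),
then the evolution algebras are isomorphic. -/
lemma iso_of_matrix (M : Matrix (Fin 3) (Fin 3) ℝ) (hM : Invertible M)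
    (A B : Matrix (Fin 3) (Fin 3) ℝ)
    (h : ∀ x y, M.mulVec (evolMul A x y) = evolMul B (M.mulVec x) (M.mulVec y)) :
    EvolIso A B := by
  refine ⟨M.toLinearEquiv' hM, fun x y => ?_⟩
  have happ : ∀ v, (M.toLinearEquiv' hM) v = M.mulVec v := fun v => rfl
  simp only [happ]; exact h x y

theorem stmt (l m g : ℝ) (hsum : l + m + g ≠ 0)
    (h : (l = 0 ∧ m * g > 0) ∨ (m = 0 ∧ l * g > 0) ∨ (g = 0 ∧ l * m > 0)) :
    EvolIso (!![l, l, l; m, m, m; g, g, g] : Matrix (Fin 3) (Fin 3) ℝ) (!![1, 0, 0; 0, 0, 0; 1, 0, 0] : Matrix (Fin 3) (Fin 3) ℝ) := by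
  obtain ⟨hl, hp⟩ | ⟨hm, hp⟩ | ⟨hg, hp⟩ := h
  · -- case l = 0, m * g > 0
    subst hl
    set r := Real.sqrt (m * g) with hrdef
    have hr2 : r * r = m * g := Real.mul_self_sqrt hp.le
    have hr : r ≠ 0 := by positivity
    have hs : m + g ≠ 0 := by simpa using hsum
    have hdet : (!![0, m, g; 1, -1, 0; 0, r, -r] : Matrix (Fin 3) (Fin 3) ℝ).det
        = r * (m + g) := by
      simp [Matrix.det_fin_three]; ring
    have hM : Invertible (!![0, m, g; 1, -1, 0; 0, r, -r] : Matrix (Fin 3) (Fin 3) ℝ) :=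
      Matrix.invertibleOfIsUnitDet _ (isUnit_iff_ne_zero.2 (hdet ▸ mul_ne_zero hr hs))
    apply iso_of_matrix _ hM
    intro x y
    funext j
    fin_cases j <;>
      simp [evolMul, Matrix.mulVec, dotProduct, Fin.sum_univ_three] <;>
      first
        | linear_combination ((x 1 - x 2) * (y 1 - y 2)) * hr2
        | linear_combination (-(x 1 - x 2) * (y 1 - y 2)) * hr2
        | linear_combination (2 * (x 1 - x 2) * (y 1 - y 2)) * hr2
        | linear_combination (-2 * (x 1 - x 2) * (y 1 - y 2)) * hr2
        | ring
  · -- case m = 0, l * g > 0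
    subst hm
    set r := Real.sqrt (l * g) with hrdef
    have hr2 : r * r = l * g := Real.mul_self_sqrt hp.le
    have hr : r ≠ 0 := by positivity
    have hs : l + g ≠ 0 := by simpa using hsum
    have hdet : (!![l, 0, g; -1, 1, 0; r, 0, -r] : Matrix (Fin 3) (Fin 3) ℝ).det
        = -(r * (l + g)) := by
      simp [Matrix.det_fin_three]; ring
    have hM : Invertible (!![l, 0, g; -1, 1, 0; r, 0, -r] : Matrix (Fin 3) (Fin 3) ℝ) :=
      Matrix.invertibleOfIsUnitDet _
        (isUnit_iff_ne_zero.2 (hdet ▸ neg_ne_zero.2 (mul_ne_zero hr hs)))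
    apply iso_of_matrix _ hM
    intro x y
    funext j
    fin_cases j <;>
      simp [evolMul, Matrix.mulVec, dotProduct, Fin.sum_univ_three] <;>
      first
        | linear_combination ((x 0 - x 2) * (y 0 - y 2)) * hr2
        | linear_combination (-(x 0 - x 2) * (y 0 - y 2)) * hr2
        | linear_combination (2 * (x 0 - x 2) * (y 0 - y 2)) * hr2
        | linear_combination (-2 * (x 0 - x 2) * (y 0 - y 2)) * hr2
        | ring
  · -- case g = 0, l * m > 0
    subst hg
    set r := Real.sqrt (l * m) with hrdef
    have hr2 : r * r = l * m := Real.mul_self_sqrt hp.le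
    have hr : r ≠ 0 := by positivity
    have hs : l + m ≠ 0 := by simpa using hsum
    have hdet : (!![l, m, 0; -1, 0, 1; r, -r, 0] : Matrix (Fin 3) (Fin 3) ℝ).det
        = r * (l + m) := by
      simp [Matrix.det_fin_three]; ring
    have hM : Invertible (!![l, m, 0; -1, 0, 1; r, -r, 0] : Matrix (Fin 3) (Fin 3) ℝ) :=
      Matrix.invertibleOfIsUnitDet _ (isUnit_iff_ne_zero.2 (hdet ▸ mul_ne_zero hr hs))
    apply iso_of_matrix _ hM
    intro x y
    funext j
    fin_cases j <;>
      simp [evolMul, Matrix.mulVec, dotProduct, Fin.sum_univ_three] <;>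
      first
        | linear_combination ((x 0 - x 1) * (y 0 - y 1)) * hr2
        | linear_combination (-(x 0 - x 1) * (y 0 - y 1)) * hr2
        | linear_combination (2 * (x 0 - x 1) * (y 0 - y 1)) * hr2
        | linear_combination (-2 * (x 0 - x 1) * (y 0 - y 1)) * hr2
        | ring
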